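/- Let M be a compact topological space with a finite Borel measure μ of total mass V = μ(M) > 0. Let φ₁, φ₂, … : M → ℂ be continuous functions, each with ∫_M φₙ dμ = 0 and ∫_M |φₙ|² dμ = 1, such that the linear span of the constant function 1 together with the functions φ₁, φ₂, … is dense in C(M; ℂ) with respect to the sup norm. Let a₁, a₂, … be positive reals such that the series Σₙ |φₙ(x)|² aₙ converges uniformly on M. For each N = 1, 2, 3, … suppose X_N = (x₁^{(N)}, …, x_N^{(N)}) ∈ M^N globally minimizes the function F_N(x₁, …, x_N) = Σ_{n=1}^∞ |φₙ(x₁) + ⋯ + φₙ(x_N)|² aₙ on M^N. Then the tuples X_N become equidistributed with respect to μ/V: for every continuous function f : M → ℂ, (1/N) · Σ_{i=1}^N f(x_i^{(N)}) → (1/V) ∫_M f dμ as N → ∞. -/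

import Mathlib

open MeasureTheory Filter Topology

/-!
Write `A = ∑ aₙ` (finite, by integrating the uniformly convergent series `∑ |φₙ|² aₙ`) and
`V = μ(M)`. Since the `φₙ` have mean zero and unit `L²` norm, averaging over the position of an
extra point `x` gives `⨍ ∑ₙ |Sₙ + φₙ(x)|² aₙ = ∑ₙ |Sₙ|² aₙ + A / V` for any coefficients `Sₙ`.
So adding a well-chosen point to a minimizer of `F_N` raises the energy by at most `A / V`,
whence `F_N(X_N) ≤ N A / V`. As each term of `F_N` is at most `F_N`, this gives
`|∑ᵢ φₙ(xᵢ)|² ≤ N A / (V aₙ)`, so the empirical mean of every `φₙ` is `O(N^{-1/2})`, matching the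
vanishing `μ`-mean of `φₙ`. The empirical means are linear and `1`-Lipschitz on `C(M; ℂ)`,
so convergence on the dense span of `1` and the `φₙ` extends to every continuous `f`.
-/

theorem tendsto_of_tendsto_of_dense_span {𝕜 E F ι : Type*} [Semiring 𝕜] [TopologicalSpace E]
    [AddCommMonoid E] [Module 𝕜 E] [UniformSpace F] [AddCommMonoid F] [Module 𝕜 F]
    [ContinuousAdd F] [ContinuousConstSMul 𝕜 F]
    {l : Filter ι} {L : ι → E →L[𝕜] F} {Λ : E →L[𝕜] F}
    (hL : Equicontinuous fun i => ⇑(L i)) {s : Set E}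
    (hs : Dense (Submodule.span 𝕜 s : Set E)) (h : ∀ x ∈ s, Tendsto (L · x) l (𝓝 (Λ x)))
    (x : E) : Tendsto (L · x) l (𝓝 (Λ x)) := by
  let P : Submodule 𝕜 E :=
    { carrier := {x | Tendsto (L · x) l (𝓝 (Λ x))}
      add_mem' := fun {x y} hx hy => by simpa only [Set.mem_ofPred_eq, map_add] using hx.add hy
      zero_mem' := by simpa only [Set.mem_ofPred_eq, map_zero] using tendsto_const_nhds
      smul_mem' := fun c x hx => by
        simpa only [Set.mem_ofPred_eq, map_smul] using hx.const_smul c }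
  have hP : IsClosed (P : Set E) := hL.isClosed_setOfPred_tendsto Λ.continuous
  have hspan : Submodule.span 𝕜 s ≤ P := Submodule.span_le.mpr h
  exact hP.closure_subset_iff.mpr hspan (hs.closure_eq ▸ Set.mem_univ x)

theorem norm_sum_sq_le_card_mul {ι E : Type*} [SeminormedAddCommGroup E] (s : Finset ι)
    (f : ι → E) : ‖∑ i ∈ s, f i‖ ^ 2 ≤ s.card * ∑ i ∈ s, ‖f i‖ ^ 2 :=
  (pow_le_pow_left₀ (norm_nonneg _) (norm_sum_le s f) 2).trans (sq_sum_le_card_mul_sum_sq ..)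

theorem tendsto_inv_smul_of_sq_norm_le {𝕜 E : Type*} [RCLike 𝕜] [NormedAddCommGroup E]
    [NormedSpace 𝕜 E] {u : ℕ → E} {C : ℝ} (h : ∀ N : ℕ, ‖u N‖ ^ 2 ≤ C * N) :
    Tendsto (fun N : ℕ => (N : 𝕜)⁻¹ • u N) atTop (𝓝 0) := by
  rw [tendsto_zero_iff_norm_tendsto_zero]
  have hlim : Tendsto (fun N : ℕ => √(C / N)) atTop (𝓝 0) := by
    simpa using (tendsto_const_div_atTop_nhds_zero_nat C).sqrt
  refine squeeze_zero (fun _ => norm_nonneg _) (fun N => ?_) hlim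
  rcases N.eq_zero_or_pos with rfl | hN
  · simp
  have hC : 0 ≤ C := by simpa using (sq_nonneg _).trans (h 1)
  have hN' : (0 : ℝ) < N := by exact_mod_cast hN
  rw [norm_smul, norm_inv, RCLike.norm_natCast, Real.le_sqrt (by positivity) (by positivity),
    mul_pow, le_div_iff₀ hN']
  calc (N : ℝ)⁻¹ ^ 2 * ‖u N‖ ^ 2 * N ≤ (N : ℝ)⁻¹ ^ 2 * (C * N) * N := by gcongr; exact h N
    _ = C := by field_simp

theorem exists_forall_sum_range_le_of_compact {M : Type*} [TopologicalSpace M] [CompactSpace M]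
    {g : ℕ → M → ℝ} (hg : ∀ n, Continuous (g n)) (hg0 : ∀ n x, 0 ≤ g n x) {c : ℝ}
    (h : ∀ s, ∃ x, ∑ n ∈ Finset.range s, g n x ≤ c) :
    ∃ x, ∀ s, ∑ n ∈ Finset.range s, g n x ≤ c := by
  let K : ℕ → Set M := fun s => {x | ∑ n ∈ Finset.range s, g n x ≤ c}
  have hK : ∀ s, IsClosed (K s) := fun s =>
    isClosed_le (continuous_finsetSum _ fun n _ => hg n) continuous_const
  have hanti : ∀ s, K (s + 1) ⊆ K s := fun s x hx =>
    le_trans (Finset.sum_le_sum_of_subset_of_nonneg (Finset.range_subset_range.mpr s.le_succ)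
      fun n _ _ => hg0 n x) hx
  obtain ⟨x, hx⟩ := IsCompact.nonempty_iInter_of_sequence_nonempty_isCompact_isClosed K hanti h
    (hK 0).isCompact hK
  exact ⟨x, fun s => Set.mem_iInter.mp hx s⟩

theorem summable_integral_of_hasSum {α : Type*} [MeasurableSpace α] {μ : Measure α}
    {g : ℕ → α → ℝ} {G : α → ℝ} (hg : ∀ n, Integrable (g n) μ) (hg0 : ∀ n x, 0 ≤ g n x)
    (hG : Integrable G μ) (hsum : ∀ x, HasSum (g · x) (G x)) :
    Summable fun n => ∫ x, g n x ∂μ := by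
  refine summable_of_sum_range_le (c := ∫ x, G x ∂μ)
    (fun n => integral_nonneg (hg0 n)) fun s => ?_
  rw [← integral_finsetSum _ fun n _ => hg n]
  exact integral_mono (integrable_finsetSum _ fun n _ => hg n) hG fun x =>
    sum_le_hasSum _ (fun n _ => hg0 n x) (hsum x)

theorem integral_norm_const_add_sq {α E : Type*} [MeasurableSpace α] {μ : Measure α}
    [IsFiniteMeasure μ] [NormedAddCommGroup E] [InnerProductSpace ℝ E] [CompleteSpace E]
    {f : α → E} (hf : MemLp f 2 μ) (hmean : ∫ x, f x ∂μ = 0) (c : E) :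
    ∫ x, ‖c + f x‖ ^ 2 ∂μ = ‖c‖ ^ 2 * μ.real Set.univ + ∫ x, ‖f x‖ ^ 2 ∂μ := by
  have hf1 : Integrable f μ := hf.integrable one_le_two
  have hinner : Integrable (fun x => 2 * inner ℝ c (f x)) μ := (hf1.const_inner c).const_mul 2
  simp_rw [norm_add_sq_real]
  rw [integral_add (by fun_prop) (hf.integrable_norm_pow two_ne_zero),
    integral_add (integrable_const _) hinner, integral_const_mul, integral_inner hf1, hmean]
  simp [mul_comm]

namespace ContinuousMap

variable {M : Type*} [TopologicalSpace M] (𝕜 : Type*) {E : Type*} [RCLike 𝕜]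
  [NormedAddCommGroup E] [NormedSpace 𝕜 E]

noncomputable def empiricalMean [CompactSpace M] {N : ℕ} (x : Fin N → M) : C(M, E) →L[𝕜] E :=
  (N : 𝕜)⁻¹ • ∑ i, evalCLM 𝕜 (x i)

variable {𝕜}

@[simp]
theorem empiricalMean_apply [CompactSpace M] {N : ℕ} (x : Fin N → M) (f : C(M, E)) :
    empiricalMean 𝕜 x f = (N : 𝕜)⁻¹ • ∑ i, f (x i) := by
  simp [empiricalMean]

theorem norm_empiricalMean_le [CompactSpace M] {N : ℕ} (x : Fin N → M) :
    ‖empiricalMean 𝕜 (E := E) x‖ ≤ 1 := by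
  refine ContinuousLinearMap.opNorm_le_bound _ zero_le_one fun f => ?_
  rcases N.eq_zero_or_pos with rfl | hN
  · simp
  have hN' : (0 : ℝ) < N := by exact_mod_cast hN
  calc ‖empiricalMean 𝕜 x f‖ ≤ (N : ℝ)⁻¹ * ∑ i, ‖f (x i)‖ := by
        rw [empiricalMean_apply, norm_smul, norm_inv, RCLike.norm_natCast]
        gcongr
        exact norm_sum_le _ _
    _ ≤ (N : ℝ)⁻¹ * ∑ _i : Fin N, ‖f‖ := by gcongr; exact f.norm_coe_le_norm _
    _ = 1 * ‖f‖ := by simp [field]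

theorem equicontinuous_empiricalMean [CompactSpace M] (X : (N : ℕ) → Fin N → M) :
    Equicontinuous fun N => ⇑(empiricalMean 𝕜 (E := E) (X N)) :=
  (LipschitzWith.uniformEquicontinuous _ 1 fun N =>
    ContinuousLinearMap.lipschitzWith_of_opNorm_le
      (by simpa using norm_empiricalMean_le (X N))).equicontinuous

theorem tendsto_empiricalMean_const [CompactSpace M] (X : (N : ℕ) → Fin N → M) (c : E) :
    Tendsto (fun N => empiricalMean 𝕜 (X N) (const M c)) atTop (𝓝 c) :=
  tendsto_const_nhds.congr' ((eventually_ne_atTop 0).mono fun N hN => by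
    simp [Finset.card_univ, ← Nat.cast_smul_eq_nsmul 𝕜, hN])

variable [MeasurableSpace M] [BorelSpace M] [CompactSpace M] (μ : Measure M) [IsFiniteMeasure μ]

noncomputable def integralCLM : C(M, 𝕜) →L[𝕜] 𝕜 :=
  (L1.integralCLM' 𝕜).comp (toLp 1 μ 𝕜)

@[simp]
theorem integralCLM_apply (f : C(M, 𝕜)) : integralCLM μ f = ∫ x, f x ∂μ := by
  rw [integralCLM, ContinuousLinearMap.comp_apply, ← L1.integral_eq', L1.integral_eq_integral]
  exact integral_congr_ae (coeFn_toLp μ f)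

end ContinuousMap

section Energy

variable {M : Type*} [TopologicalSpace M]

noncomputable def energy (φ : ℕ → C(M, ℂ)) (a : ℕ → ℝ) {N : ℕ} (x : Fin N → M) : ℝ :=
  ∑' n, ‖∑ i, φ n (x i)‖ ^ 2 * a n

variable {φ : ℕ → C(M, ℂ)} {a : ℕ → ℝ}

theorem energy_snoc {N : ℕ} (y : Fin N → M) (x : M) :
    energy φ a (Fin.snoc y x : Fin (N + 1) → M) = ∑' n, ‖∑ i, φ n (y i) + φ n x‖ ^ 2 * a n := by
  simp [energy, Fin.sum_univ_castSucc]

theorem summable_energy (ha : ∀ n, 0 ≤ a n)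
    (hsum : ∀ x, Summable fun n => ‖φ n x‖ ^ 2 * a n) {N : ℕ} (y : Fin N → M) :
    Summable fun n => ‖∑ i, φ n (y i)‖ ^ 2 * a n := by
  refine Summable.of_nonneg_of_le (fun n => mul_nonneg (by positivity) (ha n)) (fun n => ?_)
    ((summable_sum (s := Finset.univ) fun i _ => hsum (y i)).mul_left (N : ℝ))
  rw [← Finset.sum_mul, ← mul_assoc]
  simpa using mul_le_mul_of_nonneg_right
    (norm_sum_sq_le_card_mul Finset.univ fun i => φ n (y i)) (ha n)

variable [CompactSpace M] [MeasurableSpace M] [BorelSpace M] {μ : Measure M} [IsFiniteMeasure μ]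

theorem exists_tsum_norm_add_sq_mul_le (hμ : μ ≠ 0) (hmean : ∀ n, ∫ x, φ n x ∂μ = 0)
    (hnorm : ∀ n, ∫ x, ‖φ n x‖ ^ 2 ∂μ = 1) (ha : ∀ n, 0 ≤ a n) (hA : Summable a) {S : ℕ → ℂ}
    (hS : Summable fun n => ‖S n‖ ^ 2 * a n) :
    ∃ x, ∑' n, ‖S n + φ n x‖ ^ 2 * a n ≤
      ∑' n, ‖S n‖ ^ 2 * a n + (∑' n, a n) / μ.real Set.univ := by
  set g : ℕ → M → ℝ := fun n x => ‖S n + φ n x‖ ^ 2 * a n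
  have hg : ∀ n, Continuous (g n) := fun n => by fun_prop
  have hg0 : ∀ n x, 0 ≤ g n x := fun n x => mul_nonneg (by positivity) (ha n)
  have hint : ∀ n, ∫ x, g n x ∂μ = (‖S n‖ ^ 2 * μ.real Set.univ + 1) * a n := fun n => by
    rw [integral_mul_const, integral_norm_const_add_sq ((φ n).memLp μ ℂ) (hmean n), hnorm]
  have hV : 0 < μ.real Set.univ := by simpa [measureReal_def, ENNReal.toReal_pos_iff] using hμ
  have hc : HasSum (fun n => ‖S n‖ ^ 2 * a n + a n / μ.real Set.univ)
      (∑' n, ‖S n‖ ^ 2 * a n + (∑' n, a n) / μ.real Set.univ) :=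
    hS.hasSum.add (hA.hasSum.div_const _)
  have havg : ∀ s, ⨍ x, ∑ n ∈ Finset.range s, g n x ∂μ =
      ∑ n ∈ Finset.range s, (‖S n‖ ^ 2 * a n + a n / μ.real Set.univ) := fun s => by
    rw [average_eq, integral_finsetSum _ fun n _ => (hg n).integrable_of_hasCompactSupport
      (.of_compactSpace _), smul_eq_mul, Finset.mul_sum]
    refine Finset.sum_congr rfl fun n _ => ?_
    rw [hint]
    field_simp
  -- Working with partial sums avoids integrating the series itself; compactness then finds one
  -- point that is below average for every partial sum at once.
  obtain ⟨x, hx⟩ := exists_forall_sum_range_le_of_compact hg hg0 fun s => by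
    obtain ⟨x, hx⟩ := exists_le_average hμ (integrable_finsetSum _ fun n _ =>
      (hg n).integrable_of_hasCompactSupport (.of_compactSpace _))
    exact ⟨x, hx.trans ((havg s).trans_le (sum_le_hasSum _ (fun n _ =>
      add_nonneg (mul_nonneg (by positivity) (ha n)) (div_nonneg (ha n) hV.le)) hc))⟩
  exact ⟨x, Real.tsum_le_of_sum_range_le (hg0 · x) hx⟩

theorem energy_minimizer_le (hμ : μ ≠ 0) (hmean : ∀ n, ∫ x, φ n x ∂μ = 0)
    (hnorm : ∀ n, ∫ x, ‖φ n x‖ ^ 2 ∂μ = 1) (ha : ∀ n, 0 ≤ a n) (hA : Summable a)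
    (hsum : ∀ x, Summable fun n => ‖φ n x‖ ^ 2 * a n) {X : (N : ℕ) → Fin N → M}
    (hmin : ∀ N (x : Fin N → M), energy φ a (X N) ≤ energy φ a x) (N : ℕ) :
    energy φ a (X N) ≤ N * ((∑' n, a n) / μ.real Set.univ) := by
  induction N with
  | zero => simp [energy]
  | succ N ih =>
    obtain ⟨x, hx⟩ :=
      exists_tsum_norm_add_sq_mul_le hμ hmean hnorm ha hA (summable_energy ha hsum (X N))
    calc energy φ a (X (N + 1)) ≤ energy φ a (Fin.snoc (X N) x : Fin (N + 1) → M) := hmin _ _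
      _ ≤ energy φ a (X N) + (∑' n, a n) / μ.real Set.univ := by rw [energy_snoc]; exact hx
      _ ≤ (N + 1 : ℕ) * ((∑' n, a n) / μ.real Set.univ) := by push_cast; linarith

theorem summable_of_tendstoUniformly (hnorm : ∀ n, ∫ x, ‖φ n x‖ ^ 2 ∂μ = 1)
    (ha : ∀ n, 0 ≤ a n)
    (hunif : TendstoUniformly (fun s x => ∑ n ∈ Finset.range s, ‖φ n x‖ ^ 2 * a n)
      (fun x => ∑' n, ‖φ n x‖ ^ 2 * a n) atTop) :
    Summable a := by
  have hterm : ∀ n, Continuous fun x => ‖φ n x‖ ^ 2 * a n := fun n => by fun_prop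
  have hterm0 : ∀ n x, 0 ≤ ‖φ n x‖ ^ 2 * a n := fun n x => mul_nonneg (by positivity) (ha n)
  simpa [integral_mul_const, hnorm] using summable_integral_of_hasSum (μ := μ)
    (fun n => (hterm n).integrable_of_hasCompactSupport (.of_compactSpace _)) hterm0
    ((hunif.continuous (.of_forall fun s => by fun_prop)).integrable_of_hasCompactSupport
      (.of_compactSpace _))
    fun x => (hasSum_iff_tendsto_nat_of_nonneg (hterm0 · x) _).2 (hunif.tendsto_at x)

end Energy

theorem tendsto_empiricalMean_of_energy_le {M : Type*} [TopologicalSpace M] [CompactSpace M]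
    {φ : ℕ → C(M, ℂ)} {a : ℕ → ℝ} (ha : ∀ n, 0 < a n)
    (hsum : ∀ x, Summable fun n => ‖φ n x‖ ^ 2 * a n) {X : (N : ℕ) → Fin N → M} {B : ℝ}
    (hX : ∀ N, energy φ a (X N) ≤ N * B) (n : ℕ) :
    Tendsto (fun N => ContinuousMap.empiricalMean ℂ (X N) (φ n)) atTop (𝓝 0) := by
  simp only [ContinuousMap.empiricalMean_apply]
  refine tendsto_inv_smul_of_sq_norm_le (C := B / a n) fun N => ?_
  rw [div_mul_eq_mul_div, le_div_iff₀ (ha n), mul_comm B]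
  refine le_trans ?_ (hX N)
  exact (summable_energy (fun m => (ha m).le) hsum (X N)).le_tsum n fun m _ =>
    mul_nonneg (by positivity) (ha m).le

theorem equidistribution_of_minimizers_general {M : Type*} [TopologicalSpace M] [CompactSpace M]
    [MeasurableSpace M] [BorelSpace M] (μ : Measure M) [IsFiniteMeasure μ]
    (V : ℝ) (hV : V = (μ Set.univ).toReal) (hVpos : 0 < V)
    (φ : ℕ → C(M, ℂ))
    (hmean : ∀ n, ∫ x, φ n x ∂μ = 0) (hnorm : ∀ n, ∫ x, ‖φ n x‖ ^ 2 ∂μ = 1)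
    (hdense : Dense
      ((Submodule.span ℂ (insert (1 : C(M, ℂ)) (Set.range φ)) : Submodule ℂ C(M, ℂ)) :
        Set C(M, ℂ)))
    (a : ℕ → ℝ) (ha : ∀ n, 0 < a n)
    (hunif : TendstoUniformly
      (fun s : ℕ => fun x : M => ∑ n ∈ Finset.range s, ‖φ n x‖ ^ 2 * a n)
      (fun x : M => ∑' n, ‖φ n x‖ ^ 2 * a n) Filter.atTop)
    (X : (N : ℕ) → Fin N → M)
    (hmin : ∀ N : ℕ, ∀ x : Fin N → M,
      (∑' n, ‖∑ i, φ n (X N i)‖ ^ 2 * a n) ≤ ∑' n, ‖∑ i, φ n (x i)‖ ^ 2 * a n) :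
    ∀ f : C(M, ℂ), Tendsto (fun N : ℕ => (1 / (N : ℂ)) * ∑ i, f (X N i))
      atTop (nhds ((1 / (V : ℂ)) * ∫ x, f x ∂μ)) := by
  intro f
  have hVμ : μ.real Set.univ = V := by rw [hV, measureReal_def]
  have hμ : μ ≠ 0 := by rintro rfl; simp [hV] at hVpos
  have hsum : ∀ x, Summable fun n => ‖φ n x‖ ^ 2 * a n := fun x =>
    ((hasSum_iff_tendsto_nat_of_nonneg (fun n => mul_nonneg (by positivity) (ha n).le) _).2
      (hunif.tendsto_at x)).summable
  have hA : Summable a := summable_of_tendstoUniformly hnorm (fun n => (ha n).le) hunif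
  have hX := energy_minimizer_le hμ hmean hnorm (fun n => (ha n).le) hA hsum hmin
  have hgen : ∀ g ∈ insert (1 : C(M, ℂ)) (Set.range φ),
      Tendsto (fun N => ContinuousMap.empiricalMean ℂ (X N) g) atTop
        (𝓝 (((V : ℂ)⁻¹ • ContinuousMap.integralCLM μ) g)) := by
    rintro g (rfl | ⟨n, rfl⟩)
    · simpa [hVμ, hVpos.ne'] using ContinuousMap.tendsto_empiricalMean_const (𝕜 := ℂ) X (1 : ℂ)
    · simpa [hmean] using tendsto_empiricalMean_of_energy_le ha hsum hX n
  simpa using tendsto_of_tendsto_of_dense_span (ContinuousMap.equicontinuous_empiricalMean X)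
    hdense hgen f

/-- main theorem: On a compact space `M` with a finite Borel measure `μ` of
total mass `V = μ(M) > 0`, let `φₙ ∈ C(M; ℂ)` have `∫ φₙ = 0` and `∫ ‖φₙ‖² = 1`, with the
span of `1` and the `φₙ` sup-norm dense in `C(M; ℂ)`, and let `aₙ > 0` be such that
`Σₙ ‖φₙ(x)‖² aₙ` converges uniformly on `M`. If for each `N` the tuple
`X_N ∈ M^N` globally minimizes `F_N(x₁, …, x_N) = Σₙ ‖φₙ(x₁) + ⋯ + φₙ(x_N)‖² aₙ`, then the
`X_N` become equidistributed with respect to `μ/V`: for every continuous `f : M → ℂ`,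
`(1/N) Σᵢ f(xᵢ⁽ᴺ⁾) → (1/V) ∫ f dμ` as `N → ∞`. -/
theorem equidistribution_of_minimizers {M : Type*} [TopologicalSpace M] [CompactSpace M]
    [MeasurableSpace M] [BorelSpace M] (μ : Measure M) [IsFiniteMeasure μ]
    (V : ℝ) (hV : V = (μ Set.univ).toReal) (hVpos : 0 < V)
    (φ : ℕ → C(M, ℂ))
    (hmean : ∀ n, ∫ x, φ n x ∂μ = 0) (hnorm : ∀ n, ∫ x, ‖φ n x‖ ^ 2 ∂μ = 1)
    (hdense : Dense
      ((Submodule.span ℂ (insert (1 : C(M, ℂ)) (Set.range φ)) : Submodule ℂ C(M, ℂ)) :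
        Set C(M, ℂ)))
    (a : ℕ → ℝ) (ha : ∀ n, 0 < a n)
    (hsummable : ∀ x : M, Summable fun n => ‖φ n x‖ ^ 2 * a n)
    (hunif : TendstoUniformly
      (fun s : ℕ => fun x : M => ∑ n ∈ Finset.range s, ‖φ n x‖ ^ 2 * a n)
      (fun x : M => ∑' n, ‖φ n x‖ ^ 2 * a n) Filter.atTop)
    (X : (N : ℕ) → Fin N → M)
    (hmin : ∀ N : ℕ, ∀ x : Fin N → M,
      (∑' n, ‖∑ i, φ n (X N i)‖ ^ 2 * a n) ≤ ∑' n, ‖∑ i, φ n (x i)‖ ^ 2 * a n) :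
    ∀ f : C(M, ℂ), Tendsto (fun N : ℕ => (1 / (N : ℂ)) * ∑ i, f (X N i))
      atTop (nhds ((1 / (V : ℂ)) * ∫ x, f x ∂μ)) :=
  equidistribution_of_minimizers_general μ V hV hVpos φ hmean hnorm hdense a ha hunif X hmin
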